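/- Dual qualification for the fully unconstrained LQ problem: if 𝒳_t = ℝⁿ and 𝒰_t = ℝ^m for all t, then for every t the set 𝐏(t+1) := { p ∈ ℝⁿ : Γ_K(t+1, p) ≠ ∅ } is a linear subspace of ℝⁿ, the set Γ_K(t+1, 0) is a linear subspace of ℝⁿ, and consequently the qualification condition (H') holds with p̄_0 = … = p̄_T = 0 (when 0 ∈ ri(dom f)), where w ∈ Γ_K(t+1, p) if and only if x·(A_tᵀp + A_tᵀw + w) ≤ 0 for every x ∈ ker(Q_t) and u·(B_tᵀp + B_tᵀw) ≤ 0 for every u ∈ ker(R_t). -/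

import Mathlib

open Matrix

noncomputable section

open scoped Classical in
/-- Indicator function `δ_S` (0 on `S`, `+∞` off `S`) with values in `EReal`. -/
def indE {α : Type*} (S : Set α) (x : α) : EReal := if x ∈ S then 0 else ⊤

/-- Recession cone of a set: `S_∞ = { d : u + s • d ∈ S for all u ∈ S, s ≥ 0 }`. -/
def recCone {E : Type*} [AddCommGroup E] [Module ℝ E] (S : Set E) : Set E :=
  {d | ∀ u ∈ S, ∀ s : ℝ, 0 ≤ s → u + s • d ∈ S}

/-- The linear-quadratic Lagrangian
`L(x,v) = ½‖x‖²_Q + δ_X(x) + inf_{u ∈ U} { ½‖u‖²_R : v = A x + B u + d }`. -/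
def lqL {n m : ℕ} (A : Matrix (Fin n) (Fin n) ℝ) (B : Matrix (Fin n) (Fin m) ℝ)
    (d : Fin n → ℝ) (Q : Matrix (Fin n) (Fin n) ℝ) (R : Matrix (Fin m) (Fin m) ℝ)
    (X : Set (Fin n → ℝ)) (U : Set (Fin m → ℝ)) (x v : Fin n → ℝ) : EReal :=
  (((1 / 2 : ℝ) * (x ⬝ᵥ (Q *ᵥ x)) : ℝ) : EReal) + indE X x +
    ⨅ u : {u : Fin m → ℝ // u ∈ U ∧ v = A *ᵥ x + B *ᵥ u + d},
      (((1 / 2 : ℝ) * (u.1 ⬝ᵥ (R *ᵥ u.1)) : ℝ) : EReal)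

/-- The LQ dual Lagrangian (here stated for the fully unconstrained case `𝒳 = ℝⁿ`,
`𝒰 = ℝᵐ`): `K(p,w) = sup_x{x·(Aᵀp+w) − ½‖x‖²_Q} + sup_u{u·(Bᵀp) − ½‖u‖²_R} + φ·p`. -/
def lqK {n m : ℕ} (A : Matrix (Fin n) (Fin n) ℝ) (B : Matrix (Fin n) (Fin m) ℝ)
    (d : Fin n → ℝ) (Q : Matrix (Fin n) (Fin n) ℝ) (R : Matrix (Fin m) (Fin m) ℝ)
    (p w : Fin n → ℝ) : EReal :=
  (⨆ x : Fin n → ℝ, ((x ⬝ᵥ (Aᵀ *ᵥ p + w) - (1 / 2 : ℝ) * (x ⬝ᵥ (Q *ᵥ x)) : ℝ) : EReal))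
    + (⨆ u : Fin m → ℝ, ((u ⬝ᵥ (Bᵀ *ᵥ p) - (1 / 2 : ℝ) * (u ⬝ᵥ (R *ᵥ u)) : ℝ) : EReal))
    + ((d ⬝ᵥ p : ℝ) : EReal)

/-- Legendre–Fenchel conjugate of an extended-real-valued function on `ℝⁿ`. -/
def eConj {n : ℕ} (φ : (Fin n → ℝ) → EReal) (y : Fin n → ℝ) : EReal :=
  ⨆ x : Fin n → ℝ, ((x ⬝ᵥ y : ℝ) : EReal) - φ x

/-- Effective domain. -/
def edom {n : ℕ} (φ : (Fin n → ℝ) → EReal) : Set (Fin n → ℝ) := {x | φ x ≠ ⊤}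

/-- Relative interior of a set. -/
def relint {E : Type*} [AddCommGroup E] [Module ℝ E] [TopologicalSpace E]
    (S : Set E) : Set E :=
  {x ∈ S | S ∈ nhdsWithin x (affineSpan ℝ S : Set E)}

/-- Feasible velocities of the dual system: `Γ_K(t,p) = {w : K_t(p+w,w) ∈ ℝ}`. -/
def GammaK {n : ℕ} (K : ℕ → (Fin n → ℝ) → (Fin n → ℝ) → EReal) (t : ℕ)
    (p : Fin n → ℝ) : Set (Fin n → ℝ) :=
  {w | ∃ r : ℝ, K t (p + w) w = (r : EReal)}

/-- Implicit state constraint of the dual system: `𝐏(t) = {p : Γ_K(t,p) ≠ ∅}`. -/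
def PP {n : ℕ} (K : ℕ → (Fin n → ℝ) → (Fin n → ℝ) → EReal) (t : ℕ) : Set (Fin n → ℝ) :=
  {p | (GammaK K t p).Nonempty}

/-- Qualification condition (H') over the dual problem, stated for a dual Lagrangian
family `K` and dual terminal cost `f`. -/
def HypH' {n : ℕ} (T : ℕ) (K : ℕ → (Fin n → ℝ) → (Fin n → ℝ) → EReal)
    (f : (Fin n → ℝ) → EReal) : Prop :=
  ∃ pb : ℕ → Fin n → ℝ, pb T ∈ relint (edom f) ∧
    ∀ t, 1 ≤ t → t ≤ T →
      pb (t - 1) ∈ relint (PP K t) ∧ pb t - pb (t - 1) ∈ relint (GammaK K t (pb (t - 1)))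

section AuxLemmas

open Matrix in
private lemma aux_mem_range_of_perp_ker {n : ℕ} {Q : Matrix (Fin n) (Fin n) ℝ} (hs : Qᵀ = Q)
    (b : Fin n → ℝ) (hb : ∀ x, Q *ᵥ x = 0 → x ⬝ᵥ b = 0) : ∃ y, Q *ᵥ y = b := by
  let L : EuclideanSpace ℝ (Fin n) →ₗ[ℝ] EuclideanSpace ℝ (Fin n) := Matrix.toEuclideanLin Q
  have hinner : ∀ x y : EuclideanSpace ℝ (Fin n), (inner ℝ x y : ℝ) = x.ofLp ⬝ᵥ y.ofLp := by
    intro x y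
    simp [PiLp.inner_apply, dotProduct, mul_comm]
  have hle : LinearMap.range L ≤ (LinearMap.ker L)ᗮ := by
    rintro _ ⟨x, rfl⟩
    rw [Submodule.mem_orthogonal]
    intro k hk
    have hk0 : Q *ᵥ k.ofLp = 0 := by simpa [L] using congrArg WithLp.ofLp hk
    rw [hinner, show (L x).ofLp = Q *ᵥ x.ofLp from Matrix.ofLp_toEuclideanLin_apply _ _]
    rw [Matrix.dotProduct_mulVec, ← Matrix.mulVec_transpose, hs, hk0]
    exact zero_dotProduct x.ofLp
  have heq : LinearMap.range L = (LinearMap.ker L)ᗮ := by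
    apply Submodule.eq_of_le_of_finrank_eq hle
    have h1 := LinearMap.finrank_range_add_finrank_ker L
    have h2 := Submodule.finrank_add_finrank_orthogonal (LinearMap.ker L)
    omega
  have hbmem : WithLp.toLp 2 b ∈ (LinearMap.ker L)ᗮ := by
    rw [Submodule.mem_orthogonal]
    intro k hk
    rw [hinner]
    simpa using hb k.ofLp (by simpa [L] using congrArg WithLp.ofLp hk)
  rw [← heq] at hbmem
  obtain ⟨y, hy⟩ := hbmem
  exact ⟨y.ofLp, by simpa [L] using congrArg WithLp.ofLp hy⟩

open Matrix in
private lemma aux_quad_symm {n : ℕ} {Q : Matrix (Fin n) (Fin n) ℝ} (hs : Qᵀ = Q)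
    (x y : Fin n → ℝ) : y ⬝ᵥ (Q *ᵥ x) = x ⬝ᵥ (Q *ᵥ y) := by
  rw [Matrix.dotProduct_mulVec, ← Matrix.mulVec_transpose, hs, dotProduct_comm]

open Matrix in
private lemma aux_sup_quad_nonneg {k : ℕ} (Q : Matrix (Fin k) (Fin k) ℝ) (b : Fin k → ℝ) :
    (0 : EReal) ≤ ⨆ x : Fin k → ℝ, ((x ⬝ᵥ b - (1/2:ℝ) * (x ⬝ᵥ (Q *ᵥ x)) : ℝ) : EReal) := by
  have := le_iSup (fun x : Fin k → ℝ => ((x ⬝ᵥ b - (1/2:ℝ) * (x ⬝ᵥ (Q *ᵥ x)) : ℝ) : EReal)) 0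
  simpa using this

open Matrix in
private lemma aux_sup_quad_ne_bot {k : ℕ} (Q : Matrix (Fin k) (Fin k) ℝ) (b : Fin k → ℝ) :
    (⨆ x : Fin k → ℝ, ((x ⬝ᵥ b - (1/2:ℝ) * (x ⬝ᵥ (Q *ᵥ x)) : ℝ) : EReal)) ≠ ⊥ := by
  intro h
  have := aux_sup_quad_nonneg Q b
  rw [h] at this
  exact absurd this (by simp)

open Matrix in
private lemma aux_sup_quad_ne_top_iff {k : ℕ} {Q : Matrix (Fin k) (Fin k) ℝ} (hQ : Q.PosSemidef)
    (b : Fin k → ℝ) :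
    (⨆ x : Fin k → ℝ, ((x ⬝ᵥ b - (1/2:ℝ) * (x ⬝ᵥ (Q *ᵥ x)) : ℝ) : EReal)) ≠ ⊤
    ↔ ∀ x, Q *ᵥ x = 0 → x ⬝ᵥ b ≤ 0 := by
  have hs : Qᵀ = Q := by
    have := hQ.1
    rwa [Matrix.IsHermitian, Matrix.conjTranspose_eq_transpose_of_trivial] at this
  constructor
  · intro htop x hx
    by_contra hpos
    push_neg at hpos
    set S := ⨆ x : Fin k → ℝ, ((x ⬝ᵥ b - (1/2:ℝ) * (x ⬝ᵥ (Q *ᵥ x)) : ℝ) : EReal) with hS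
    have hbot : S ≠ ⊥ := aux_sup_quad_ne_bot Q b
    set r := S.toReal with hr
    have hSr : S = (r : EReal) := (EReal.coe_toReal htop hbot).symm
    have hbound : ∀ s : ℝ, s * (x ⬝ᵥ b) ≤ r := by
      intro s
      have hterm := le_iSup
        (fun z : Fin k → ℝ => ((z ⬝ᵥ b - (1/2:ℝ) * (z ⬝ᵥ (Q *ᵥ z)) : ℝ) : EReal)) (s • x)
      rw [← hS, hSr] at hterm
      have hq : (s • x) ⬝ᵥ (Q *ᵥ (s • x)) = 0 := by
        rw [Matrix.mulVec_smul, hx]; simp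
      have : ((s • x) ⬝ᵥ b - (1/2:ℝ) * ((s • x) ⬝ᵥ (Q *ᵥ (s • x))) : ℝ) ≤ r :=
        EReal.coe_le_coe_iff.mp hterm
      rw [hq] at this
      simpa [smul_dotProduct, smul_eq_mul] using this
    have h1 := hbound ((r + 1) / (x ⬝ᵥ b))
    rw [div_mul_cancel₀ _ (ne_of_gt hpos)] at h1
    linarith
  · intro hker
    have hker' : ∀ x, Q *ᵥ x = 0 → x ⬝ᵥ b = 0 := by
      intro x hx
      have h1 := hker x hx
      have h2 := hker (-x) (by rw [Matrix.mulVec_neg, hx, neg_zero])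
      rw [neg_dotProduct] at h2
      linarith
    obtain ⟨y, hy⟩ := aux_mem_range_of_perp_ker hs b hker'
    have hub : ∀ x : Fin k → ℝ,
        (x ⬝ᵥ b - (1/2:ℝ) * (x ⬝ᵥ (Q *ᵥ x)) : ℝ) ≤ (1/2:ℝ) * (y ⬝ᵥ (Q *ᵥ y)) := by
      intro x
      have hpsd : 0 ≤ (x - y) ⬝ᵥ (Q *ᵥ (x - y)) := by
        have := hQ.dotProduct_mulVec_nonneg (x - y)
        simpa using this
      have hexp : (x - y) ⬝ᵥ (Q *ᵥ (x - y))
          = x ⬝ᵥ (Q *ᵥ x) - 2 * (x ⬝ᵥ (Q *ᵥ y)) + y ⬝ᵥ (Q *ᵥ y) := by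
        rw [Matrix.mulVec_sub, sub_dotProduct, dotProduct_sub,
          dotProduct_sub, aux_quad_symm hs x y]
        ring
      have hxb : x ⬝ᵥ b = x ⬝ᵥ (Q *ᵥ y) := by rw [hy]
      rw [hexp] at hpsd
      rw [hxb]
      linarith
    intro htop
    have : (⨆ x : Fin k → ℝ, ((x ⬝ᵥ b - (1/2:ℝ) * (x ⬝ᵥ (Q *ᵥ x)) : ℝ) : EReal))
        ≤ (((1/2:ℝ) * (y ⬝ᵥ (Q *ᵥ y)) : ℝ) : EReal) :=
      iSup_le fun x => EReal.coe_le_coe_iff.mpr (hub x)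
    rw [htop] at this
    exact absurd (top_le_iff.mp this) (EReal.coe_ne_top _)

open Matrix in
private lemma aux_le_iff_eq_on_ker {k : ℕ} {M : Matrix (Fin k) (Fin k) ℝ} {b : Fin k → ℝ} :
    (∀ x, M *ᵥ x = 0 → x ⬝ᵥ b ≤ 0) ↔ (∀ x, M *ᵥ x = 0 → x ⬝ᵥ b = 0) := by
  constructor
  · intro h x hx
    have h1 := h x hx
    have h2 := h (-x) (by rw [Matrix.mulVec_neg, hx, neg_zero])
    rw [neg_dotProduct] at h2
    linarith
  · intro h x hx
    exact le_of_eq (h x hx)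

private lemma aux_zero_mem_relint {E : Type*} [AddCommGroup E] [Module ℝ E] [TopologicalSpace E]
    (S : Submodule ℝ E) :
    (0 : E) ∈ S ∧ (S : Set E) ∈ nhdsWithin 0 (affineSpan ℝ (S : Set E) : Set E) := by
  refine ⟨S.zero_mem, ?_⟩
  rw [mem_nhdsWithin]
  refine ⟨Set.univ, isOpen_univ, trivial, ?_⟩
  rw [Set.univ_inter]
  have h : affineSpan ℝ (S : Set E) ≤ S.toAffineSubspace := by
    rw [affineSpan_le]; intro x hx; exact hx
  intro x hx
  exact h hx

end AuxLemmas

open Matrix in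
private lemma aux_lqK_finite_iff {n m : ℕ} (A : Matrix (Fin n) (Fin n) ℝ)
    (B : Matrix (Fin n) (Fin m) ℝ) (d : Fin n → ℝ) {Q : Matrix (Fin n) (Fin n) ℝ}
    {R : Matrix (Fin m) (Fin m) ℝ} (hQ : Q.PosSemidef) (hR : R.PosSemidef) (p w : Fin n → ℝ) :
    (∃ r : ℝ, lqK A B d Q R p w = (r : EReal)) ↔
      ((∀ x, Q *ᵥ x = 0 → x ⬝ᵥ (Aᵀ *ᵥ p + w) ≤ 0) ∧
       (∀ u, R *ᵥ u = 0 → u ⬝ᵥ (Bᵀ *ᵥ p) ≤ 0)) := by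
  set S1 := ⨆ x : Fin n → ℝ, ((x ⬝ᵥ (Aᵀ *ᵥ p + w) - (1/2:ℝ) * (x ⬝ᵥ (Q *ᵥ x)) : ℝ) : EReal)
    with hS1
  set S2 := ⨆ u : Fin m → ℝ, ((u ⬝ᵥ (Bᵀ *ᵥ p) - (1/2:ℝ) * (u ⬝ᵥ (R *ᵥ u)) : ℝ) : EReal)
    with hS2
  have h1b : S1 ≠ ⊥ := hS1 ▸ aux_sup_quad_ne_bot Q _
  have h2b : S2 ≠ ⊥ := hS2 ▸ aux_sup_quad_ne_bot R _
  have hL : lqK A B d Q R p w = S1 + S2 + ((d ⬝ᵥ p : ℝ) : EReal) := by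
    rw [lqK, hS1, hS2]
  constructor
  · rintro ⟨r, hr⟩
    rw [hL] at hr
    constructor
    · rw [← aux_sup_quad_ne_top_iff hQ, ← hS1]
      intro h1t
      rw [h1t, EReal.top_add_of_ne_bot h2b,
        EReal.top_add_of_ne_bot (EReal.coe_ne_bot _)] at hr
      exact EReal.coe_ne_top r hr.symm
    · rw [← aux_sup_quad_ne_top_iff hR, ← hS2]
      intro h2t
      rw [h2t, EReal.add_top_of_ne_bot h1b,
        EReal.top_add_of_ne_bot (EReal.coe_ne_bot _)] at hr
      exact EReal.coe_ne_top r hr.symm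
  · rintro ⟨hx, hu⟩
    have h1t : S1 ≠ ⊤ := hS1 ▸ (aux_sup_quad_ne_top_iff hQ _).mpr hx
    have h2t : S2 ≠ ⊤ := hS2 ▸ (aux_sup_quad_ne_top_iff hR _).mpr hu
    refine ⟨S1.toReal + S2.toReal + d ⬝ᵥ p, ?_⟩
    rw [hL, ← EReal.coe_toReal h1t h1b, ← EReal.coe_toReal h2t h2b,
      ← EReal.coe_add, ← EReal.coe_add]
    norm_num

/-- **Dual qualification for the fully unconstrained LQ problem.**
If `𝒳_t = ℝⁿ` and `𝒰_t = ℝᵐ` for all `t`, then every `𝐏(t+1)` and `Γ_K(t+1,0)` is a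
linear subspace, and (H') holds with `p̄_0 = ⋯ = p̄_T = 0` (when `0 ∈ ri(dom f)`);
moreover `w ∈ Γ_K(t+1,p)` iff `x·(Aᵀp+Aᵀw+w) ≤ 0` for all `x ∈ ker Q_t` and
`u·(Bᵀp+Bᵀw) ≤ 0` for all `u ∈ ker R_t`. -/
theorem lq_dual_qualification_unconstrained (n m T : ℕ) (hT : 1 ≤ T)
    (A : ℕ → Matrix (Fin n) (Fin n) ℝ) (B : ℕ → Matrix (Fin n) (Fin m) ℝ)
    (d : ℕ → Fin n → ℝ)
    (Q : ℕ → Matrix (Fin n) (Fin n) ℝ) (R : ℕ → Matrix (Fin m) (Fin m) ℝ)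
    (hQ : ∀ t, (Q t).PosSemidef) (hR : ∀ t, (R t).PosSemidef) :
    (∀ (t : ℕ) (p w : Fin n → ℝ),
        w ∈ GammaK
            (fun s => lqK (A (s - 1)) (B (s - 1)) (d (s - 1)) (Q (s - 1)) (R (s - 1)))
            (t + 1) p ↔
          ((∀ x : Fin n → ℝ, Q t *ᵥ x = 0 →
              x ⬝ᵥ ((A t)ᵀ *ᵥ p + (A t)ᵀ *ᵥ w + w) ≤ 0) ∧
            (∀ u : Fin m → ℝ, R t *ᵥ u = 0 →
              u ⬝ᵥ ((B t)ᵀ *ᵥ p + (B t)ᵀ *ᵥ w) ≤ 0))) ∧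
    (∀ t : ℕ, ∃ S : Submodule ℝ (Fin n → ℝ),
        (S : Set (Fin n → ℝ)) = PP
          (fun s => lqK (A (s - 1)) (B (s - 1)) (d (s - 1)) (Q (s - 1)) (R (s - 1)))
          (t + 1)) ∧
    (∀ t : ℕ, ∃ S : Submodule ℝ (Fin n → ℝ),
        (S : Set (Fin n → ℝ)) = GammaK
          (fun s => lqK (A (s - 1)) (B (s - 1)) (d (s - 1)) (Q (s - 1)) (R (s - 1)))
          (t + 1) (0 : Fin n → ℝ)) ∧
    ((0 : Fin n → ℝ) ∈ relint (edom
        (fun b => eConj (fun a => (((1 / 2 : ℝ) * (a ⬝ᵥ (Q T *ᵥ a)) : ℝ) : EReal)) (-b))) →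
      (∀ t, 1 ≤ t → t ≤ T →
          (0 : Fin n → ℝ) ∈ relint (PP
            (fun s => lqK (A (s - 1)) (B (s - 1)) (d (s - 1)) (Q (s - 1)) (R (s - 1))) t) ∧
          (0 : Fin n → ℝ) ∈ relint (GammaK
            (fun s => lqK (A (s - 1)) (B (s - 1)) (d (s - 1)) (Q (s - 1)) (R (s - 1))) t
            (0 : Fin n → ℝ))) ∧
      HypH' T
        (fun s => lqK (A (s - 1)) (B (s - 1)) (d (s - 1)) (Q (s - 1)) (R (s - 1)))
        (fun b => eConj (fun a => (((1 / 2 : ℝ) * (a ⬝ᵥ (Q T *ᵥ a)) : ℝ) : EReal)) (-b))) := by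
  set K : ℕ → (Fin n → ℝ) → (Fin n → ℝ) → EReal :=
    fun s => lqK (A (s - 1)) (B (s - 1)) (d (s - 1)) (Q (s - 1)) (R (s - 1)) with hKdef
  have hmem : ∀ (t : ℕ) (p w : Fin n → ℝ),
      w ∈ GammaK K (t + 1) p ↔
        ((∀ x : Fin n → ℝ, Q t *ᵥ x = 0 →
            x ⬝ᵥ ((A t)ᵀ *ᵥ p + (A t)ᵀ *ᵥ w + w) ≤ 0) ∧
         (∀ u : Fin m → ℝ, R t *ᵥ u = 0 →
            u ⬝ᵥ ((B t)ᵀ *ᵥ p + (B t)ᵀ *ᵥ w) ≤ 0)) := by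
    intro t p w
    have h0 : w ∈ GammaK K (t + 1) p ↔
        ∃ r : ℝ, lqK (A t) (B t) (d t) (Q t) (R t) (p + w) w = (r : EReal) := by
      rw [hKdef]
      simp only [GammaK, Set.mem_setOf_eq, Nat.add_sub_cancel]
    rw [h0, aux_lqK_finite_iff _ _ _ (hQ t) (hR t)]
    have e1 : (A t)ᵀ *ᵥ (p + w) + w = (A t)ᵀ *ᵥ p + (A t)ᵀ *ᵥ w + w := by
      rw [Matrix.mulVec_add]
    have e2 : (B t)ᵀ *ᵥ (p + w) = (B t)ᵀ *ᵥ p + (B t)ᵀ *ᵥ w := by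
      rw [Matrix.mulVec_add]
    rw [e1, e2]
  have hGamma : ∀ t : ℕ, ∃ S : Submodule ℝ (Fin n → ℝ),
      (S : Set (Fin n → ℝ)) = GammaK K (t + 1) (0 : Fin n → ℝ) := by
    intro t
    let Smod : Submodule ℝ (Fin n → ℝ) :=
      { carrier := {w | (∀ x, Q t *ᵥ x = 0 → x ⬝ᵥ ((A t)ᵀ *ᵥ w + w) = 0) ∧
          (∀ u, R t *ᵥ u = 0 → u ⬝ᵥ ((B t)ᵀ *ᵥ w) = 0)},
        add_mem' := by
          rintro v₁ v₂ ⟨ha1, ha2⟩ ⟨hb1, hb2⟩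
          refine ⟨fun x hx => ?_, fun u hu => ?_⟩
          · have e1 := ha1 x hx; have e2 := hb1 x hx
            simp only [Matrix.mulVec_add, dotProduct_add] at e1 e2 ⊢
            linarith
          · have e1 := ha2 u hu; have e2 := hb2 u hu
            simp only [Matrix.mulVec_add, dotProduct_add] at e1 e2 ⊢
            linarith
        zero_mem' := ⟨fun x _ => by simp, fun u _ => by simp⟩
        smul_mem' := by
          rintro c v ⟨hv1, hv2⟩
          refine ⟨fun x hx => ?_, fun u hu => ?_⟩
          · have e1 := hv1 x hx
            simp only [Matrix.mulVec_smul, dotProduct_add, dotProduct_smul,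
              smul_eq_mul] at e1 ⊢
            linear_combination c * e1
          · have e1 := hv2 u hu
            simp only [Matrix.mulVec_smul, dotProduct_smul, smul_eq_mul] at e1 ⊢
            linear_combination c * e1 }
    refine ⟨Smod, ?_⟩
    ext w
    rw [hmem t 0 w]
    have hmemS : w ∈ (Smod : Set (Fin n → ℝ)) ↔
        ((∀ x, Q t *ᵥ x = 0 → x ⬝ᵥ ((A t)ᵀ *ᵥ w + w) = 0) ∧
         (∀ u, R t *ᵥ u = 0 → u ⬝ᵥ ((B t)ᵀ *ᵥ w) = 0)) := Iff.rfl
    rw [hmemS]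
    have e1 : (A t)ᵀ *ᵥ (0 : Fin n → ℝ) + (A t)ᵀ *ᵥ w + w = (A t)ᵀ *ᵥ w + w := by
      rw [Matrix.mulVec_zero, zero_add]
    have e2 : (B t)ᵀ *ᵥ (0 : Fin n → ℝ) + (B t)ᵀ *ᵥ w = (B t)ᵀ *ᵥ w := by
      rw [Matrix.mulVec_zero, zero_add]
    rw [e1, e2]
    exact (and_congr aux_le_iff_eq_on_ker aux_le_iff_eq_on_ker).symm
  have hPP : ∀ t : ℕ, ∃ S : Submodule ℝ (Fin n → ℝ),
      (S : Set (Fin n → ℝ)) = PP K (t + 1) := by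
    intro t
    let Smod : Submodule ℝ (Fin n → ℝ) :=
      { carrier := {p | ∃ w : Fin n → ℝ,
          (∀ x, Q t *ᵥ x = 0 → x ⬝ᵥ ((A t)ᵀ *ᵥ p + (A t)ᵀ *ᵥ w + w) = 0) ∧
          (∀ u, R t *ᵥ u = 0 → u ⬝ᵥ ((B t)ᵀ *ᵥ p + (B t)ᵀ *ᵥ w) = 0)},
        add_mem' := by
          rintro p₁ p₂ ⟨w₁, ha1, ha2⟩ ⟨w₂, hb1, hb2⟩
          refine ⟨w₁ + w₂, fun x hx => ?_, fun u hu => ?_⟩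
          · have e1 := ha1 x hx; have e2 := hb1 x hx
            simp only [Matrix.mulVec_add, dotProduct_add] at e1 e2 ⊢
            linarith
          · have e1 := ha2 u hu; have e2 := hb2 u hu
            simp only [Matrix.mulVec_add, dotProduct_add] at e1 e2 ⊢
            linarith
        zero_mem' := ⟨0, fun x _ => by simp, fun u _ => by simp⟩
        smul_mem' := by
          rintro c p ⟨w, hv1, hv2⟩
          refine ⟨c • w, fun x hx => ?_, fun u hu => ?_⟩
          · have e1 := hv1 x hx
            simp only [Matrix.mulVec_smul, dotProduct_add, dotProduct_smul,
              smul_eq_mul] at e1 ⊢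
            linear_combination c * e1
          · have e1 := hv2 u hu
            simp only [Matrix.mulVec_smul, dotProduct_add, dotProduct_smul,
              smul_eq_mul] at e1 ⊢
            linear_combination c * e1 }
    refine ⟨Smod, ?_⟩
    ext p
    have hmemS : p ∈ (Smod : Set (Fin n → ℝ)) ↔
        (∃ w : Fin n → ℝ,
          (∀ x, Q t *ᵥ x = 0 → x ⬝ᵥ ((A t)ᵀ *ᵥ p + (A t)ᵀ *ᵥ w + w) = 0) ∧
          (∀ u, R t *ᵥ u = 0 → u ⬝ᵥ ((B t)ᵀ *ᵥ p + (B t)ᵀ *ᵥ w) = 0)) := Iff.rfl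
    rw [hmemS]
    constructor
    · rintro ⟨w, h1, h2⟩
      exact ⟨w, (hmem t p w).mpr ⟨aux_le_iff_eq_on_ker.mpr h1, aux_le_iff_eq_on_ker.mpr h2⟩⟩
    · rintro ⟨w, hw⟩
      obtain ⟨h1, h2⟩ := (hmem t p w).mp hw
      exact ⟨w, aux_le_iff_eq_on_ker.mp h1, aux_le_iff_eq_on_ker.mp h2⟩
  refine ⟨hmem, hPP, hGamma, ?_⟩
  intro h0
  have hrel : ∀ t, 1 ≤ t → t ≤ T →
      (0 : Fin n → ℝ) ∈ relint (PP K t) ∧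
      (0 : Fin n → ℝ) ∈ relint (GammaK K t (0 : Fin n → ℝ)) := by
    intro t ht _
    obtain ⟨S1, hS1⟩ := hPP (t - 1)
    obtain ⟨S2, hS2⟩ := hGamma (t - 1)
    rw [show t - 1 + 1 = t from by omega] at hS1 hS2
    constructor
    · rw [← hS1]
      exact aux_zero_mem_relint S1
    · rw [← hS2]
      exact aux_zero_mem_relint S2
  constructor
  · exact hrel
  · unfold HypH'
    refine ⟨fun _ => (0 : Fin n → ℝ), h0, ?_⟩
    intro t h1 h2
    refine ⟨(hrel t h1 h2).1, ?_⟩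
    have := (hrel t h1 h2).2
    simpa using this

end
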